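/- Suppose s₁, s₂, s₃, s₄ : I → ℝ are differentiable on the interval I and trace rectangles gracing γ. Then A₂ + A₄ is differentiable on I and (A₂ + A₄)′(t) = −Y(t) · X′(t) for every t ∈ I. -/

import Mathlib

noncomputable section

def pdet (u v : EuclideanSpace ℝ (Fin 2)) : ℝ := u 0 * v 1 - u 1 * v 0

/-!
Write `u = p₂ - p₁` and `w = p₄ - p₁ = p₃ - p₂` for two adjacent sides of the rectangle and `vⱼ`
for the velocity of `pⱼ`. By the fundamental theorem of calculus the arc-chord area between
parameters `a` and `b` changes at the rate `½ det(γ b - γ a, b' γ'(b) + a' γ'(a))`. For `A₂ + A₄`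
the two chords are `w` and `-w`, and the differentiated parallelogram relation
`v₁ + v₃ = v₂ + v₄` collapses the sum of the rates to `det(w, u')`. Since `w` is `u` turned a
quarter counterclockwise and scaled by `Y / X`, `det(w, ·) = -(Y / X) ⟨u, ·⟩`, and
`⟨u, u'⟩ / X = X'`.
-/

open Filter
open scoped RealInnerProductSpace

local notation "ℝ²" => EuclideanSpace ℝ (Fin 2)

theorem HasDerivWithinAt.pdet {f g : ℝ → ℝ²} {f' g' : ℝ²} {s : Set ℝ} {t : ℝ}
    (hf : HasDerivWithinAt f f' s t) (hg : HasDerivWithinAt g g' s t) :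
    HasDerivWithinAt (fun x => pdet (f x) (g x)) (pdet f' (g t) + pdet (f t) g') s t := by
  have hc : ∀ (i : Fin 2) {h : ℝ → ℝ²} {h' : ℝ²}, HasDerivWithinAt h h' s t →
      HasDerivWithinAt (fun x => h x i) (h' i) s t := fun i _ _ hh =>
    (EuclideanSpace.proj (𝕜 := ℝ) i).hasFDerivAt.comp_hasDerivWithinAt t hh
  unfold _root_.pdet
  refine (((hc 0 hf).mul (hc 1 hg)).sub ((hc 1 hf).mul (hc 0 hg))).congr_deriv ?_
  ring

theorem Continuous.pdet {α : Type*} [TopologicalSpace α] {f g : α → ℝ²}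
    (hf : Continuous f) (hg : Continuous g) : Continuous fun x => pdet (f x) (g x) := by
  unfold _root_.pdet
  fun_prop

theorem pdet_sq_add_inner_sq (u w : ℝ²) :
    pdet u w ^ 2 + ⟪u, w⟫ ^ 2 = ‖u‖ ^ 2 * ‖w‖ ^ 2 := by
  simp only [pdet, EuclideanSpace.real_norm_sq_eq, PiLp.inner_apply, RCLike.inner_apply,
    conj_trivial, Fin.sum_univ_two]
  ring

theorem ne_zero_of_pdet_pos {u w : ℝ²} (h : 0 < pdet u w) : u ≠ 0 := by
  rintro rfl
  simp [pdet] at h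

/-- The hypotheses say that `‖u‖ w = ‖w‖ J u` for the quarter turn `J`, and
`det(J u, v) = -⟨u, v⟩`. -/
theorem norm_mul_pdet_eq_of_inner_eq_zero {u w : ℝ²} (horth : ⟪u, w⟫ = 0)
    (hpos : 0 < pdet u w) (v : ℝ²) : ‖u‖ * pdet w v = -(‖w‖ * ⟪u, v⟫) := by
  have hdet : pdet u w = ‖u‖ * ‖w‖ :=
    (sq_eq_sq₀ hpos.le (by positivity)).1 <| by
      linear_combination pdet_sq_add_inner_sq u w - ⟪u, w⟫ * horth
  have hu : ‖u‖ ≠ 0 := norm_ne_zero_iff.2 (ne_zero_of_pdet_pos hpos)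
  apply mul_left_cancel₀ hu
  have hsq : ‖u‖ ^ 2 = u 0 ^ 2 + u 1 ^ 2 := by
    simp [EuclideanSpace.real_norm_sq_eq, Fin.sum_univ_two]
  simp only [pdet, PiLp.inner_apply, RCLike.inner_apply, conj_trivial, Fin.sum_univ_two] at *
  linear_combination (w 0 * v 1 - w 1 * v 0) * hsq + (u 0 * v 1 - u 1 * v 0) * horth
    - (u 0 * v 0 + u 1 * v 1) * hdet

theorem HasDerivWithinAt.norm_of_ne_zero {F : Type*} [NormedAddCommGroup F]
    [InnerProductSpace ℝ F] {f : ℝ → F} {f' : F} {s : Set ℝ} {x : ℝ}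
    (hf : HasDerivWithinAt f f' s x) (h0 : f x ≠ 0) :
    HasDerivWithinAt (‖f ·‖) (⟪f x, f'⟫ / ‖f x‖) s x := by
  have hpos : 0 < ‖f x‖ := norm_pos_iff.2 h0
  have := (Real.hasDerivAt_sqrt (pow_pos hpos 2).ne').comp_hasDerivWithinAt x hf.norm_sq
  simp only [Function.comp_def, Real.sqrt_sq (norm_nonneg _)] at this
  refine this.congr_deriv ?_
  field_simp

theorem Continuous.hasDerivWithinAt_intervalIntegral {E : Type*} [NormedAddCommGroup E]
    [NormedSpace ℝ E] [CompleteSpace E] {f : ℝ → E} (hf : Continuous f) {a b : ℝ → ℝ}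
    {a' b' : ℝ} {s : Set ℝ} {t : ℝ} (ha : HasDerivWithinAt a a' s t)
    (hb : HasDerivWithinAt b b' s t) :
    HasDerivWithinAt (fun x => ∫ y in a x..b x, f y) (b' • f (b t) - a' • f (a t)) s t := by
  have hF : ∀ u, HasDerivAt (fun v => ∫ y in (0 : ℝ)..v, f y) (f u) u := fun u =>
    (hf.integral_hasStrictDerivAt 0 u).hasDerivAt
  simpa only [Function.comp_def, Pi.sub_def,
    intervalIntegral.integral_interval_sub_left (hf.intervalIntegrable _ _)
      (hf.intervalIntegrable _ _)] using
    ((hF (b t)).scomp_hasDerivWithinAt t hb).sub ((hF (a t)).scomp_hasDerivWithinAt t ha)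

theorem ContDiff.hasDerivWithinAt_comp {E : Type*} [NormedAddCommGroup E] [NormedSpace ℝ E]
    {γ : ℝ → E} (hγ : ContDiff ℝ 1 γ) {c : ℝ → ℝ} {c' : ℝ} {s : Set ℝ} {t : ℝ}
    (hc : HasDerivWithinAt c c' s t) :
    HasDerivWithinAt (fun x => γ (c x)) (c' • deriv γ (c t)) s t :=
  (hγ.differentiable one_ne_zero _).hasDerivAt.scomp_hasDerivWithinAt t hc

theorem Function.Periodic.deriv {E : Type*} [NormedAddCommGroup E] [NormedSpace ℝ E]
    {f : ℝ → E} {c : ℝ} (h : Function.Periodic f c) : Function.Periodic (deriv f) c := by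
  intro x
  rw [← deriv_comp_add_const, show (fun y => f (y + c)) = f from funext h]

def arcChordArea (γ : ℝ → ℝ²) (a b : ℝ) : ℝ :=
  (1/2) * (∫ x in a..b, pdet (γ x) (deriv γ x)) + (1/2) * pdet (γ b) (γ a)

theorem hasDerivWithinAt_arcChordArea {γ : ℝ → ℝ²} (hγ : ContDiff ℝ 1 γ) {a b : ℝ → ℝ}
    {a' b' : ℝ} {s : Set ℝ} {t : ℝ} (ha : HasDerivWithinAt a a' s t)
    (hb : HasDerivWithinAt b b' s t) :
    HasDerivWithinAt (fun x => arcChordArea γ (a x) (b x))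
      ((1/2) * pdet (γ (b t) - γ (a t)) (b' • deriv γ (b t) + a' • deriv γ (a t))) s t := by
  have harc := (hγ.continuous.pdet (hγ.continuous_deriv le_rfl)).hasDerivWithinAt_intervalIntegral
    ha hb
  have hchord := (hγ.hasDerivWithinAt_comp hb).pdet (hγ.hasDerivWithinAt_comp ha)
  refine ((harc.const_mul _).add (hchord.const_mul _)).congr_deriv ?_
  simp only [pdet, PiLp.add_apply, PiLp.sub_apply, PiLp.smul_apply, smul_eq_mul]
  ring

theorem half_pdet_add_half_pdet_of_rectangle {p₁ p₂ p₃ p₄ v₁ v₂ v₃ v₄ : ℝ²}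
    (hpar : p₁ + p₃ = p₂ + p₄) (hvel : v₁ + v₃ = v₂ + v₄)
    (hperp : ⟪p₂ - p₁, p₄ - p₁⟫ = 0) (hccw : 0 < pdet (p₂ - p₁) (p₄ - p₁)) :
    (1/2) * pdet (p₃ - p₂) (v₃ + v₂) + (1/2) * pdet (p₁ - p₄) (v₁ + v₄)
      = -(‖p₃ - p₂‖ * (⟪p₂ - p₁, v₂ - v₁⟫ / ‖p₂ - p₁‖)) := by
  have hside : p₃ - p₂ = p₄ - p₁ := by linear_combination (norm := module) hpar
  have hrate : (1/2 : ℝ) • (v₃ + v₂ - (v₁ + v₄)) = v₂ - v₁ := by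
    linear_combination (norm := module) (1/2 : ℝ) • hvel
  have hu : ‖p₂ - p₁‖ ≠ 0 := norm_ne_zero_iff.2 (ne_zero_of_pdet_pos hccw)
  have key := norm_mul_pdet_eq_of_inner_eq_zero hperp hccw (v₂ - v₁)
  calc (1/2) * pdet (p₃ - p₂) (v₃ + v₂) + (1/2) * pdet (p₁ - p₄) (v₁ + v₄)
      = pdet (p₄ - p₁) ((1/2 : ℝ) • (v₃ + v₂ - (v₁ + v₄))) := by
        rw [hside, ← neg_sub p₄ p₁]
        simp only [pdet, PiLp.neg_apply, PiLp.smul_apply, PiLp.sub_apply, PiLp.add_apply,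
          smul_eq_mul]
        ring
    _ = -(‖p₃ - p₂‖ * (⟪p₂ - p₁, v₂ - v₁⟫ / ‖p₂ - p₁‖)) := by
        rw [hrate, hside]
        field_simp
        linarith

theorem stmt4_general
    (γ : ℝ → EuclideanSpace ℝ (Fin 2)) (hγ : ContDiff ℝ 1 γ)
    (hper : ∀ s : ℝ, γ (s + 1) = γ s)
    (s₁ s₂ s₃ s₄ : ℝ → ℝ)
    (I : Set ℝ)
    (hs₁ : ∀ t ∈ I, DifferentiableWithinAt ℝ s₁ I t)
    (hs₂ : ∀ t ∈ I, DifferentiableWithinAt ℝ s₂ I t)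
    (hs₃ : ∀ t ∈ I, DifferentiableWithinAt ℝ s₃ I t)
    (hs₄ : ∀ t ∈ I, DifferentiableWithinAt ℝ s₄ I t)
    (hpar : ∀ t ∈ I, γ (s₁ t) + γ (s₃ t) = γ (s₂ t) + γ (s₄ t))
    (hperp : ∀ t ∈ I, inner ℝ (γ (s₂ t) - γ (s₁ t)) (γ (s₄ t) - γ (s₁ t)) = (0 : ℝ))
    (hccw : ∀ t ∈ I, pdet (γ (s₂ t) - γ (s₁ t)) (γ (s₄ t) - γ (s₁ t)) > 0)
    (X Y : ℝ → ℝ)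
    (hX : X = fun t => ‖γ (s₂ t) - γ (s₁ t)‖)
    (hY : Y = fun t => ‖γ (s₃ t) - γ (s₂ t)‖)
    (A₂ A₄ : ℝ → ℝ)
    (hA₂ : A₂ = fun t => (1/2) * (∫ s in (s₂ t)..(s₃ t), pdet (γ s) (deriv γ s))
        + (1/2) * pdet (γ (s₃ t)) (γ (s₂ t)))
    (hA₄ : A₄ = fun t => (1/2) * (∫ s in (s₄ t)..(s₁ t + 1), pdet (γ s) (deriv γ s))
        + (1/2) * pdet (γ (s₁ t + 1)) (γ (s₄ t)))
:
    ∀ t ∈ I, HasDerivWithinAt (fun t => A₂ t + A₄ t)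
      (-(Y t * derivWithin X I t)) I t := by
  intro t ht
  -- At a point isolated in `I` every value is a derivative within `I`; elsewhere such
  -- derivatives are unique.
  by_cases hacc : AccPt t (𝓟 I)
  swap
  · exact HasFDerivWithinAt.of_not_accPt hacc
  have hd₁ := (hs₁ t ht).hasDerivWithinAt
  have hd₂ := (hs₂ t ht).hasDerivWithinAt
  have hd₃ := (hs₃ t ht).hasDerivWithinAt
  have hd₄ := (hs₄ t ht).hasDerivWithinAt
  have hvel := hacc.uniqueDiffWithinAt.eq_deriv _
    ((hγ.hasDerivWithinAt_comp hd₁).add (hγ.hasDerivWithinAt_comp hd₃))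
    (((hγ.hasDerivWithinAt_comp hd₂).add (hγ.hasDerivWithinAt_comp hd₄)).congr hpar (hpar t ht))
  have hA₄' := hasDerivWithinAt_arcChordArea hγ hd₄ (hd₁.add_const 1)
  rw [hper (s₁ t), Function.Periodic.deriv hper (s₁ t)] at hA₄'
  have hX' := ((hγ.hasDerivWithinAt_comp hd₂).fun_sub
    (hγ.hasDerivWithinAt_comp hd₁)).norm_of_ne_zero (ne_zero_of_pdet_pos (hccw t ht))
  subst hA₂ hA₄ hX hY
  rw [hX'.derivWithin hacc.uniqueDiffWithinAt]
  exact ((hasDerivWithinAt_arcChordArea hγ hd₂ hd₃).add hA₄').congr_deriv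
    (half_pdet_add_half_pdet_of_rectangle (hpar t ht) hvel (hperp t ht) (hccw t ht))

/-- If `s₁,…,s₄` are differentiable on the interval `I` and trace rectangles
gracing `γ`, then `A₂ + A₄` is differentiable on `I` with
`(A₂ + A₄)′ = −Y · X′`. -/
theorem stmt4
    (γ : ℝ → EuclideanSpace ℝ (Fin 2)) (hγ : ContDiff ℝ 1 γ)
    (hper : ∀ s : ℝ, γ (s + 1) = γ s)
    (s₁ s₂ s₃ s₄ : ℝ → ℝ)
    (I : Set ℝ) (hI : I.OrdConnected)
    (hs₁ : ∀ t ∈ I, DifferentiableWithinAt ℝ s₁ I t)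
    (hs₂ : ∀ t ∈ I, DifferentiableWithinAt ℝ s₂ I t)
    (hs₃ : ∀ t ∈ I, DifferentiableWithinAt ℝ s₃ I t)
    (hs₄ : ∀ t ∈ I, DifferentiableWithinAt ℝ s₄ I t)
    (hpar : ∀ t ∈ I, γ (s₁ t) + γ (s₃ t) = γ (s₂ t) + γ (s₄ t))
    (hperp : ∀ t ∈ I, inner ℝ (γ (s₂ t) - γ (s₁ t)) (γ (s₄ t) - γ (s₁ t)) = (0 : ℝ))
    (hccw : ∀ t ∈ I, pdet (γ (s₂ t) - γ (s₁ t)) (γ (s₄ t) - γ (s₁ t)) > 0)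
    (X Y : ℝ → ℝ)
    (hX : X = fun t => ‖γ (s₂ t) - γ (s₁ t)‖)
    (hY : Y = fun t => ‖γ (s₃ t) - γ (s₂ t)‖)
    (A₁ A₂ A₃ A₄ : ℝ → ℝ)
    (hA₁ : A₁ = fun t => (1/2) * (∫ s in (s₁ t)..(s₂ t), pdet (γ s) (deriv γ s))
        + (1/2) * pdet (γ (s₂ t)) (γ (s₁ t)))
    (hA₂ : A₂ = fun t => (1/2) * (∫ s in (s₂ t)..(s₃ t), pdet (γ s) (deriv γ s))
        + (1/2) * pdet (γ (s₃ t)) (γ (s₂ t)))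
    (hA₃ : A₃ = fun t => (1/2) * (∫ s in (s₃ t)..(s₄ t), pdet (γ s) (deriv γ s))
        + (1/2) * pdet (γ (s₄ t)) (γ (s₃ t)))
    (hA₄ : A₄ = fun t => (1/2) * (∫ s in (s₄ t)..(s₁ t + 1), pdet (γ s) (deriv γ s))
        + (1/2) * pdet (γ (s₁ t + 1)) (γ (s₄ t)))
:
    ∀ t ∈ I, HasDerivWithinAt (fun t => A₂ t + A₄ t)
      (-(Y t * derivWithin X I t)) I t :=
  stmt4_general γ hγ hper s₁ s₂ s₃ s₄ I hs₁ hs₂ hs₃ hs₄ hpar hperp hccw X Y hX hY A₂ A₄ hA₂ hA₄
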